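/- arXiv:1312.7409 — 4 statements merged into one kernel-verified Lean document; each statement's English description precedes it below -/
import Mathlib

section
/- For a multiplication operator M_v : L^p(μ) → L^q(μ) with 1 ≤ q < p < ∞ on a non-atomic measure space: if M_v is bounded and bounded below (‖M_v f‖_q ≥ δ‖f‖_p for some δ > 0 and all f ∈ L^p), then v = 0 almost everywhere; in particular no such injective closed-range multiplication operator exists unless L^p = 0. -/
open MeasureTheory Filter
open scoped NNReal ENNReal

/-- A measure is non-atomic on the whole space: every set of positive measure has a
measurable subset of strictly smaller positive measure. -/
def NonAtomicMeasure {X : Type*} [MeasurableSpace X] (μ : Measure X) : Prop :=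
  ∀ A : Set X, MeasurableSet A → 0 < μ A →
    ∃ B ⊆ A, MeasurableSet B ∧ 0 < μ B ∧ μ B < μ A

/-!
If `μ ≠ 0`, non-atomicity gives, for every `N`, disjoint sets `B₁, …, B_N` of positive finite
measure; let `fᵢ` be the indicator of `Bᵢ` normalised in `Lᵖ`. For disjointly supported
functions the `r`-th power of the `Lʳ` norm is additive, so `f = ∑ fᵢ` has `‖f‖_p = N^{1/p}`,
while the lower bound applied to each `fᵢ` gives `‖v f‖_q ≥ δ N^{1/q}`. Boundedness then forces
`δ N^{1/q} ≤ C N^{1/p}`, impossible for large `N` because `q < p`. Hence `μ = 0`.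
-/

open Function Topology

theorem ENNReal.exists_nat_mul_rpow_lt_mul_rpow {a b : ℝ} (hab : a < b) {c d : ℝ≥0∞}
    (hc : c ≠ ∞) (hd : d ≠ 0) : ∃ N : ℕ, c * (N : ℝ≥0∞) ^ a < d * (N : ℝ≥0∞) ^ b := by
  have hlim : Tendsto (fun N : ℕ => d * (N : ℝ≥0∞) ^ (b - a)) atTop (𝓝 ∞) := by
    simpa [ENNReal.mul_top hd] using ENNReal.Tendsto.const_mul (a := d)
      ((ENNReal.tendsto_rpow_at_top (sub_pos.2 hab)).comp ENNReal.tendsto_nat_nhds_top)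
      (Or.inl ENNReal.top_ne_zero)
  obtain ⟨N, hcN, hN⟩ :=
    ((hlim.eventually (lt_mem_nhds hc.lt_top)).and (eventually_ge_atTop 1)).exists
  have hN0 : (N : ℝ≥0∞) ≠ 0 := Nat.cast_ne_zero.2 (Nat.one_le_iff_ne_zero.1 hN)
  refine ⟨N, ?_⟩
  calc c * (N : ℝ≥0∞) ^ a < d * (N : ℝ≥0∞) ^ (b - a) * (N : ℝ≥0∞) ^ a :=
        ENNReal.mul_lt_mul_left (ENNReal.rpow_pos (pos_iff_ne_zero.2 hN0) (by simp)).ne'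
          (ENNReal.rpow_ne_top_of_nonneg' (pos_iff_ne_zero.2 hN0) (by simp)) hcN
    _ = d * (N : ℝ≥0∞) ^ b := by
        rw [mul_assoc, ← ENNReal.rpow_add _ _ hN0 (ENNReal.natCast_ne_top N), sub_add_cancel]

theorem Finset.apply_sum_of_pairwise_disjoint_support {ι X M N : Type*} [AddCommMonoid M]
    [AddCommMonoid N] {φ : M → N} (hφ : φ 0 = 0) (s : Finset ι) {f : ι → X → M}
    (hd : Pairwise (Disjoint on fun i => support (f i))) (x : X) :
    φ (∑ i ∈ s, f i x) = ∑ i ∈ s, φ (f i x) := by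
  by_cases hx : ∃ j ∈ s, f j x ≠ 0
  · obtain ⟨j, hj, hjx⟩ := hx
    have hzero : ∀ i ≠ j, f i x = 0 := fun i hij =>
      notMem_support.1 fun hix => Set.disjoint_left.1 (hd hij) hix hjx
    rw [Finset.sum_eq_single_of_mem j hj fun i _ hij => hzero i hij,
      Finset.sum_eq_single_of_mem j hj fun i _ hij => by rw [hzero i hij, hφ]]
  · push Not at hx
    rw [Finset.sum_eq_zero hx, hφ, Finset.sum_eq_zero fun i hi => by rw [hx i hi, hφ]]

section

variable {X : Type*} {mX : MeasurableSpace X} {μ : Measure X} {p : ℝ≥0∞}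

theorem eLpNorm_sum_rpow_of_pairwise_disjoint_support {ι E : Type*} [NormedAddCommGroup E]
    (s : Finset ι) {f : ι → X → E} (hd : Pairwise (Disjoint on fun i => support (f i)))
    (hf : ∀ i ∈ s, AEStronglyMeasurable (f i) μ) (hp0 : p ≠ 0) (hp : p ≠ ∞) :
    eLpNorm (fun x => ∑ i ∈ s, f i x) p μ ^ p.toReal = ∑ i ∈ s, eLpNorm (f i) p μ ^ p.toReal := by
  have hpos : 0 < p.toReal := ENNReal.toReal_pos hp0 hp
  simp only [eLpNorm_eq_eLpNorm' hp0 hp, ← lintegral_rpow_enorm_eq_rpow_eLpNorm' hpos]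
  rw [← lintegral_finsetSum' s fun i hi => (hf i hi).enorm.pow_const _]
  exact lintegral_congr <| Finset.apply_sum_of_pairwise_disjoint_support
    (φ := fun y : E => ‖y‖ₑ ^ p.toReal) (by simp [hpos]) s hd

theorem exists_memLp_support_subset_eLpNorm_eq_one {B : Set X} (hB : MeasurableSet B)
    (h0 : μ B ≠ 0) (hfin : μ B ≠ ∞) (hp0 : p ≠ 0) (hp : p ≠ ∞) :
    ∃ f : X → ℝ, MemLp f p μ ∧ support f ⊆ B ∧ eLpNorm f p μ = 1 := by
  set c : ℝ≥0∞ := (μ B ^ (1 / p.toReal))⁻¹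
  have hc : c ≠ ∞ := ENNReal.inv_ne_top.2 (by simp [ENNReal.rpow_eq_zero_iff, h0, hfin])
  refine ⟨B.indicator fun _ => c.toReal, memLp_indicator_const p hB _ (Or.inr hfin),
    Set.support_indicator_subset, ?_⟩
  rw [eLpNorm_indicator_const hB hp0 hp, Real.enorm_of_nonneg ENNReal.toReal_nonneg,
    ENNReal.ofReal_toReal hc]
  exact ENNReal.inv_mul_cancel (by simp [ENNReal.rpow_eq_zero_iff, h0, hfin])
    (by simp [ENNReal.rpow_eq_top_iff, h0, hfin])

namespace NonAtomicMeasure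

theorem exists_subset_measure_pos_lt_top (hna : NonAtomicMeasure μ) {S : Set X}
    (hS : MeasurableSet S) (h : 0 < μ S) :
    ∃ B ⊆ S, MeasurableSet B ∧ 0 < μ B ∧ μ B < ∞ := by
  obtain ⟨B, hBS, hB, hpos, hlt⟩ := hna S hS h
  exact ⟨B, hBS, hB, hpos, hlt.trans_le le_top⟩

theorem exists_pairwise_disjoint_subsets (hna : NonAtomicMeasure μ) (N : ℕ) {S : Set X}
    (hS : MeasurableSet S) (h : 0 < μ S) :
    ∃ B : Fin N → Set X, (∀ i, B i ⊆ S ∧ MeasurableSet (B i) ∧ 0 < μ (B i)) ∧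
      Pairwise (Disjoint on B) := by
  induction N generalizing S with
  | zero => exact ⟨Fin.elim0, fun i => i.elim0, fun i => i.elim0⟩
  | succ N ih =>
    obtain ⟨B₀, hB₀S, hB₀, hB₀pos, hlt⟩ := hna S hS h
    obtain ⟨B, hB, hdisj⟩ :=
      ih (hS.diff hB₀) ((tsub_pos_of_lt hlt).trans_le (le_measure_sdiff ..))
    refine ⟨Fin.cons B₀ B,
      Fin.cases ⟨hB₀S, hB₀, hB₀pos⟩ fun i => ⟨(hB i).1.trans Set.sdiff_subset, (hB i).2⟩, ?_⟩
    have hB₀B : ∀ i, Disjoint B₀ (B i) := fun i => Set.disjoint_sdiff_right.mono_right (hB i).1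
    intro i j hij
    cases i using Fin.cases <;> cases j using Fin.cases
    · exact absurd rfl hij
    · exact hB₀B _
    · exact (hB₀B _).symm
    · exact hdisj (Fin.succ_injective _ |>.ne_iff.1 hij)

end NonAtomicMeasure

theorem natCast_rpow_le_of_bounded_below {q : ℝ≥0∞} (hp0 : p ≠ 0) (hp : p ≠ ∞) (hq0 : q ≠ 0)
    (hq : q ≠ ∞) {v : X → ℝ} (hv : AEStronglyMeasurable v μ) {C δ : ℝ≥0∞}
    (hbdd : ∀ f : X → ℝ, MemLp f p μ → eLpNorm (fun x => v x * f x) q μ ≤ C * eLpNorm f p μ)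
    (hbelow : ∀ f : X → ℝ, MemLp f p μ → δ * eLpNorm f p μ ≤ eLpNorm (fun x => v x * f x) q μ)
    {N : ℕ} (f : Fin N → X → ℝ) (hf : ∀ i, MemLp (f i) p μ) (hf1 : ∀ i, eLpNorm (f i) p μ = 1)
    (hd : Pairwise (Disjoint on fun i => support (f i))) :
    δ * (N : ℝ≥0∞) ^ q.toReal⁻¹ ≤ C * (N : ℝ≥0∞) ^ p.toReal⁻¹ := by
  have hppos : 0 < p.toReal := ENNReal.toReal_pos hp0 hp
  have hqpos : 0 < q.toReal := ENNReal.toReal_pos hq0 hq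
  have hF : eLpNorm (fun x => ∑ i, f i x) p μ ^ p.toReal = N := by
    simp [eLpNorm_sum_rpow_of_pairwise_disjoint_support _ hd (fun i _ => (hf i).1) hp0 hp, hf1]
  have hvF : N * δ ^ q.toReal ≤ eLpNorm (fun x => v x * ∑ i, f i x) q μ ^ q.toReal := by
    have hd' : Pairwise (Disjoint on fun i => support fun x => v x * f i x) := fun i j hij =>
      (hd hij).mono (support_mul_subset_right _ _) (support_mul_subset_right _ _)
    simp only [Finset.mul_sum]
    rw [eLpNorm_sum_rpow_of_pairwise_disjoint_support _ hd' (fun i _ => hv.mul (hf i).1) hq0 hq]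
    calc (N : ℝ≥0∞) * δ ^ q.toReal = ∑ _i : Fin N, δ ^ q.toReal := by simp
      _ ≤ _ := Finset.sum_le_sum fun i _ => by
        gcongr
        simpa [hf1] using hbelow _ (hf i)
  calc δ * (N : ℝ≥0∞) ^ q.toReal⁻¹ = (N * δ ^ q.toReal) ^ q.toReal⁻¹ := by
        rw [ENNReal.mul_rpow_of_nonneg _ _ (inv_nonneg.2 hqpos.le),
          ENNReal.rpow_rpow_inv hqpos.ne', mul_comm]
    _ ≤ eLpNorm (fun x => v x * ∑ i, f i x) q μ := (ENNReal.rpow_inv_le_iff hqpos).2 hvF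
    _ ≤ C * eLpNorm (fun x => ∑ i, f i x) p μ := hbdd _ (memLp_finsetSum _ fun i _ => hf i)
    _ = C * (N : ℝ≥0∞) ^ p.toReal⁻¹ := by
        rw [← hF, ENNReal.rpow_rpow_inv hppos.ne']

end

theorem mult_bounded_below_nonatomic_general
    {X : Type*} {mX : MeasurableSpace X} (μ : Measure X)
    (hna : NonAtomicMeasure μ)
    (p q : ℝ) (hq : 1 ≤ q) (hqp : q < p)
    (v : X → ℝ) (hv : Measurable v)
    (C : ℝ≥0)
    (hbdd : ∀ f : X → ℝ, MemLp f (ENNReal.ofReal p) μ →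
      eLpNorm (fun x => v x * f x) (ENNReal.ofReal q) μ ≤
        C * eLpNorm f (ENNReal.ofReal p) μ)
    (δ : ℝ) (hδ : 0 < δ)
    (hbelow : ∀ f : X → ℝ, MemLp f (ENNReal.ofReal p) μ →
      ENNReal.ofReal δ * eLpNorm f (ENNReal.ofReal p) μ ≤
        eLpNorm (fun x => v x * f x) (ENNReal.ofReal q) μ) :
    v =ᵐ[μ] 0 := by
  have hq0 : 0 < q := by linarith
  have hp0 : 0 < p := by linarith
  suffices hμ : μ = 0 by simp [hμ, EventuallyEq]
  by_contra hμ
  obtain ⟨S, -, hS, hSpos, hSfin⟩ :=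
    hna.exists_subset_measure_pos_lt_top MeasurableSet.univ (Measure.measure_univ_pos.2 hμ)
  obtain ⟨N, hN⟩ := ENNReal.exists_nat_mul_rpow_lt_mul_rpow (inv_strictAnti₀ hq0 hqp)
    ENNReal.coe_ne_top (ENNReal.ofReal_pos.2 hδ).ne'
  obtain ⟨B, hB, hdisj⟩ := hna.exists_pairwise_disjoint_subsets N hS hSpos
  choose f hf hsupp hf1 using fun i => exists_memLp_support_subset_eLpNorm_eq_one (hB i).2.1
    (hB i).2.2.ne' ((measure_mono (hB i).1).trans_lt hSfin).ne
    (ENNReal.ofReal_pos.2 hp0).ne' ENNReal.ofReal_ne_top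
  have hNle := natCast_rpow_le_of_bounded_below (ENNReal.ofReal_pos.2 hp0).ne'
    ENNReal.ofReal_ne_top (ENNReal.ofReal_pos.2 hq0).ne' ENNReal.ofReal_ne_top
    hv.aestronglyMeasurable hbdd hbelow f hf hf1
    fun i j hij => (hdisj hij).mono (hsupp i) (hsupp j)
  rw [ENNReal.toReal_ofReal hp0.le, ENNReal.toReal_ofReal hq0.le] at hNle
  exact hNle.not_gt hN

/-- For `M_v : L^p → L^q` with `1 ≤ q < p < ∞` on a non-atomic measure
space: if `M_v` is bounded and bounded below, then `v = 0` a.e. -/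
theorem mult_bounded_below_nonatomic
    {X : Type*} {mX : MeasurableSpace X} (μ : Measure X) [SigmaFinite μ]
    (hna : NonAtomicMeasure μ)
    (p q : ℝ) (hq : 1 ≤ q) (hqp : q < p)
    (v : X → ℝ) (hv : Measurable v)
    (C : ℝ≥0)
    (hbdd : ∀ f : X → ℝ, MemLp f (ENNReal.ofReal p) μ →
      eLpNorm (fun x => v x * f x) (ENNReal.ofReal q) μ ≤
        C * eLpNorm f (ENNReal.ofReal p) μ)
    (δ : ℝ) (hδ : 0 < δ)
    (hbelow : ∀ f : X → ℝ, MemLp f (ENNReal.ofReal p) μ →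
      ENNReal.ofReal δ * eLpNorm f (ENNReal.ofReal p) μ ≤
        eLpNorm (fun x => v x * f x) (ENNReal.ofReal q) μ) :
    v =ᵐ[μ] 0 :=
  mult_bounded_below_nonatomic_general (mX := mX) μ hna p q hq hqp v hv C hbdd δ hδ hbelow
end

section
/- If 1 ≤ p < q < ∞ and the multiplication operator M_v : L^p(μ) → L^q(μ) is bounded on a non-atomic measure space, then v = 0 almost everywhere. -/
/-!
If `v` is not a.e. zero, then `|v| > ε` on a set `A` of finite positive measure. Testing the
bound on the indicator of a measurable `B ⊆ A` gives `ε μ(B)^(1/q) ≤ C μ(B)^(1/p)`, i.e.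
`ε ≤ C μ(B)^(1/p - 1/q)`. Repeated halving, which non-atomicity allows, produces such `B` of
arbitrarily small positive measure, and since `1/p - 1/q > 0` the right-hand side then drops
below `ε`.
-/

open MeasureTheory Filter
open scoped NNReal ENNReal

open Set Topology

namespace NonAtomicMeasure

variable {X : Type*} [MeasurableSpace X] {μ : Measure X} {A : Set X}

theorem exists_subset_measure_pos_le_half (hna : NonAtomicMeasure μ) (hA : MeasurableSet A)
    (hA0 : 0 < μ A) (hAfin : μ A ≠ ∞) :
    ∃ B ⊆ A, MeasurableSet B ∧ 0 < μ B ∧ μ B ≤ μ A / 2 := by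
  obtain ⟨B, hBA, hB, hB0, hBA_lt⟩ := hna A hA hA0
  by_cases hBhalf : μ B ≤ μ A / 2
  · exact ⟨B, hBA, hB, hB0, hBhalf⟩
  -- otherwise the complement of `B` in `A` is the smaller half
  have hdiff : μ (A \ B) = μ A - μ B :=
    measure_sdiff hBA hB.nullMeasurableSet (ne_top_of_le_ne_top hAfin (measure_mono hBA))
  refine ⟨A \ B, sdiff_subset, hA.diff hB, by rwa [hdiff, tsub_pos_iff_lt], ?_⟩
  rw [hdiff, tsub_le_iff_right]
  calc μ A = μ A / 2 + μ A / 2 := (ENNReal.add_halves _).symm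
    _ ≤ μ A / 2 + μ B := by gcongr; exact (not_le.1 hBhalf).le

theorem exists_subset_measure_pos_le_mul_inv_two_pow (hna : NonAtomicMeasure μ)
    (hA : MeasurableSet A) (hA0 : 0 < μ A) (hAfin : μ A ≠ ∞) (n : ℕ) :
    ∃ B ⊆ A, MeasurableSet B ∧ 0 < μ B ∧ μ B ≤ μ A * 2⁻¹ ^ n := by
  induction n with
  | zero => exact ⟨A, subset_rfl, hA, hA0, by simp⟩
  | succ n ih =>
    obtain ⟨B, hBA, hB, hB0, hBle⟩ := ih
    have hBfin : μ B ≠ ∞ := ne_top_of_le_ne_top hAfin (measure_mono hBA)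
    obtain ⟨B', hB'B, hB', hB'0, hB'le⟩ := hna.exists_subset_measure_pos_le_half hB hB0 hBfin
    refine ⟨B', hB'B.trans hBA, hB', hB'0, ?_⟩
    calc μ B' ≤ μ B / 2 := hB'le
      _ ≤ μ A * 2⁻¹ ^ n / 2 := by gcongr
      _ = μ A * 2⁻¹ ^ (n + 1) := by rw [pow_succ, ENNReal.div_eq_inv_mul]; ring

theorem exists_subset_measure_pos_lt (hna : NonAtomicMeasure μ) (hA : MeasurableSet A)
    (hA0 : 0 < μ A) (hAfin : μ A ≠ ∞) {δ : ℝ≥0∞} (hδ : 0 < δ) :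
    ∃ B ⊆ A, MeasurableSet B ∧ 0 < μ B ∧ μ B < δ := by
  have hlim : Tendsto (fun n : ℕ => μ A * 2⁻¹ ^ n) atTop (𝓝 0) := by
    simpa using ENNReal.Tendsto.const_mul
      (ENNReal.tendsto_pow_atTop_nhds_zero_iff.2 (by norm_num)) (Or.inr hAfin)
  obtain ⟨n, hn⟩ := (hlim.eventually (gt_mem_nhds hδ)).exists
  obtain ⟨B, hBA, hB, hB0, hBle⟩ := hna.exists_subset_measure_pos_le_mul_inv_two_pow hA hA0 hAfin n
  exact ⟨B, hBA, hB, hB0, hBle.trans_lt hn⟩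

end NonAtomicMeasure

section

variable {X : Type*} [MeasurableSpace X] {μ : Measure X}

theorem exists_pos_measure_lt_abs_of_not_ae_eq_zero {v : X → ℝ} (hv : ¬ v =ᵐ[μ] 0) :
    ∃ ε > 0, 0 < μ {x | ε < |v x|} := by
  by_contra! hsmall
  refine hv ?_
  have hbound (n : ℕ) : ∀ᵐ x ∂μ, |v x| ≤ 1 / (n + 1) := by
    rw [ae_iff]
    simpa using hsmall (1 / (n + 1)) (by positivity)
  filter_upwards [ae_all_iff.2 hbound] with x hx
  exact abs_nonpos_iff.1 (ge_of_tendsto' tendsto_one_div_add_atTop_nhds_zero_nat hx)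

theorem enorm_le_mul_measure_rpow_of_eLpNorm_mul_le {p q : ℝ≥0∞} (hp0 : p ≠ 0) (hp_top : p ≠ ∞)
    (hq0 : q ≠ 0) (hq_top : q ≠ ∞) {v : X → ℝ} {C : ℝ≥0}
    (hbdd : ∀ f : X → ℝ, MemLp f p μ → eLpNorm (fun x => v x * f x) q μ ≤ C * eLpNorm f p μ)
    {B : Set X} (hB : MeasurableSet B) (hB0 : μ B ≠ 0) (hBfin : μ B ≠ ∞) {c : ℝ}
    (hc : ∀ x ∈ B, |c| ≤ |v x|) :
    ‖c‖ₑ ≤ C * μ B ^ (1 / p.toReal - 1 / q.toReal) := by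
  have htest : ‖c‖ₑ * μ B ^ (1 / q.toReal) ≤ C * μ B ^ (1 / p.toReal) :=
    calc ‖c‖ₑ * μ B ^ (1 / q.toReal) = eLpNorm (B.indicator fun _ => c) q μ :=
          (eLpNorm_indicator_const hB hq0 hq_top).symm
      _ ≤ eLpNorm (fun x => v x * B.indicator (fun _ => (1 : ℝ)) x) q μ := by
          refine eLpNorm_mono fun x => ?_
          by_cases hx : x ∈ B <;> simp [hx, hc]
      _ ≤ C * eLpNorm (B.indicator fun _ => (1 : ℝ)) p μ :=
          hbdd _ (memLp_indicator_const p hB 1 (Or.inr hBfin))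
      _ = C * μ B ^ (1 / p.toReal) := by simp [eLpNorm_indicator_const hB hp0 hp_top]
  rwa [ENNReal.rpow_sub _ _ hB0 hBfin, ← mul_div_assoc, ENNReal.le_div_iff_mul_le
    (Or.inl (by simp [hB0, hBfin])) (Or.inl (by simp [hB0, hBfin]))]

end

/-- If `1 ≤ p < q < ∞` and `M_v : L^p → L^q` is bounded on a non-atomic
measure space, then `v = 0` a.e. -/
theorem mult_bounded_increasing_exponent_nonatomic
    {X : Type*} {mX : MeasurableSpace X} (μ : Measure X) [SigmaFinite μ]
    (hna : NonAtomicMeasure μ)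
    (p q : ℝ) (hp : 1 ≤ p) (hpq : p < q)
    (v : X → ℝ) (hv : Measurable v)
    (C : ℝ≥0)
    (hbdd : ∀ f : X → ℝ, MemLp f (ENNReal.ofReal p) μ →
      eLpNorm (fun x => v x * f x) (ENNReal.ofReal q) μ ≤
        C * eLpNorm f (ENNReal.ofReal p) μ) :
    v =ᵐ[μ] 0 := by
  by_contra hv0
  obtain ⟨ε, hε, hvε⟩ := exists_pos_measure_lt_abs_of_not_ae_eq_zero hv0
  obtain ⟨A, hA, hAε, hA0, hAfin⟩ :=
    Measure.exists_subset_measure_lt_top (measurableSet_lt measurable_const hv.abs) hvε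
  have hp0 : 0 < p := one_pos.trans_le hp
  have hq0 : 0 < q := hp0.trans hpq
  have hr : 0 < 1 / (ENNReal.ofReal p).toReal - 1 / (ENNReal.ofReal q).toReal := by
    rw [ENNReal.toReal_ofReal hp0.le, ENNReal.toReal_ofReal hq0.le, sub_pos]
    exact one_div_lt_one_div_of_lt hp0 hpq
  obtain ⟨δ, hδ, hsmall⟩ := ENNReal.nhds_zero_basis.eventually_iff.1
    ((ENNReal.tendsto_const_mul_rpow_nhds_zero_of_pos ENNReal.coe_ne_top hr).eventually
      (gt_mem_nhds (enorm_pos.2 hε.ne')))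
  obtain ⟨B, hBA, hB, hB0, hBδ⟩ := hna.exists_subset_measure_pos_lt hA hA0 hAfin.ne hδ
  refine (hsmall hBδ).not_ge (enorm_le_mul_measure_rpow_of_eLpNorm_mul_le
    (ENNReal.ofReal_pos.2 hp0).ne' ENNReal.ofReal_ne_top (ENNReal.ofReal_pos.2 hq0).ne'
    ENNReal.ofReal_ne_top hbdd hB hB0.ne' (ne_top_of_le_ne_top hAfin.ne (measure_mono hBA))
    fun x hx => ?_)
  rw [abs_of_pos hε]
  exact (hAε (hBA hx)).le
end

section
/- Let 1 < q < p < ∞ with 1/q = 1/p + 1/r. If w is 𝒜-measurable and M_w maps L^q(𝒜) boundedly into L^p(𝒜), and the 𝒜-atomic part consists of atoms {A_n}, then sup_n |w(A_n)|^r / μ(A_n) < ∞, where w(A_n) denotes the constant value of w on the atom A_n. -/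
open MeasureTheory Filter
open scoped NNReal ENNReal

/-- An atom of `μ`. -/
def IsMeasAtom {X : Type*} [mX : MeasurableSpace X] (μ : MeasureTheory.Measure X)
    (A : Set X) : Prop :=
  MeasurableSet A ∧ 0 < μ A ∧
    ∀ F : Set X, MeasurableSet F → F ⊆ A → μ F = 0 ∨ μ F = μ A

/-! Testing the bound on the indicator of an atom `A`, on which `w` is the constant `c`, gives
`|c| μ(A)^(1/p) ≤ C μ(A)^(1/q)`, i.e. `|c| ≤ C μ(A)^(1/r)`, so `|c|^r / μ(A) ≤ C^r`
uniformly in the atom. -/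

theorem enorm_mul_measure_rpow_le_of_eLpNorm_mul_le {X : Type*} {mX : MeasurableSpace X}
    {μ : Measure X} {p q : ℝ≥0∞} (hp : p ≠ 0) (hq : q ≠ 0) {w : X → ℝ} {C : ℝ≥0}
    (hbdd : ∀ f : X → ℝ, MemLp f q μ →
      eLpNorm (fun x => w x * f x) p μ ≤ C * eLpNorm f q μ)
    {s : Set X} (hs : MeasurableSet s) (hμs0 : μ s ≠ 0) (hμs : μ s ≠ ∞) {c : ℝ}
    (hc : ∀ᵐ x ∂μ, x ∈ s → w x = c) :
    ‖c‖ₑ * μ s ^ (1 / p.toReal) ≤ C * μ s ^ (1 / q.toReal) := by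
  have hwf : (fun x => w x * s.indicator (fun _ => (1 : ℝ)) x) =ᵐ[μ] s.indicator fun _ => c := by
    filter_upwards [hc] with x hx
    by_cases hxs : x ∈ s <;> simp [hxs, hx]
  simpa [eLpNorm_congr_ae hwf, eLpNorm_indicator_const' hs hμs0 hp,
    eLpNorm_indicator_const' hs hμs0 hq] using
    hbdd _ (memLp_indicator_const q hs 1 (Or.inr hμs))

theorem ENNReal.rpow_le_mul_of_mul_rpow_le {x C a : ℝ≥0∞} {p q r : ℝ} (hr : 0 < r)
    (hpqr : 1 / p + 1 / r = 1 / q) (ha0 : a ≠ 0) (ha : a ≠ ∞)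
    (h : x * a ^ (1 / p) ≤ C * a ^ (1 / q)) :
    x ^ r ≤ C ^ r * a := by
  have hx : x ≤ C * a ^ (1 / r) := by
    rw [← hpqr, ENNReal.rpow_add _ _ ha0 ha, mul_comm (a ^ (1 / p)), ← mul_assoc] at h
    exact (ENNReal.mul_le_mul_iff_left (ENNReal.rpow_pos (pos_iff_ne_zero.2 ha0) ha).ne'
      (ENNReal.rpow_ne_top_of_ne_zero ha0 ha)).1 h
  calc x ^ r ≤ (C * a ^ (1 / r)) ^ r := ENNReal.rpow_le_rpow hx hr.le
    _ = C ^ r * a := by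
      rw [ENNReal.mul_rpow_of_nonneg _ _ hr.le, ← ENNReal.rpow_mul, one_div_mul_cancel hr.ne',
        ENNReal.rpow_one]

theorem mult_up_exponent_atoms_sup_finite_general
    {X : Type*} {mX : MeasurableSpace X} (μ : Measure X)
    (p q r : ℝ) (hq : 1 < q) (hqp : q < p) (hr : 1 / p + 1 / r = 1 / q)
    (A : ℕ → Set X)
    (hatom : ∀ n, IsMeasAtom μ (A n))
    (hfin : ∀ n, μ (A n) < ∞)
    (w : X → ℝ)
    (c : ℕ → ℝ) (hc : ∀ n, ∀ᵐ x ∂μ, x ∈ A n → w x = c n)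
    (C : ℝ≥0)
    (hbdd : ∀ f : X → ℝ, MemLp f (ENNReal.ofReal q) μ →
      eLpNorm (fun x => w x * f x) (ENNReal.ofReal p) μ ≤
        C * eLpNorm f (ENNReal.ofReal q) μ) :
    ∃ M : ℝ, ∀ n, |c n| ^ r / (μ (A n)).toReal ≤ M := by
  have hq0 : 0 < q := zero_lt_one.trans hq
  have hp0 : 0 < p := hq0.trans hqp
  have hr0 : 0 < r := one_div_pos.1 <| by linarith [one_div_lt_one_div_of_lt hq0 hqp]
  refine ⟨(C : ℝ) ^ r, fun n => ?_⟩
  obtain ⟨hAn, hpos, -⟩ := hatom n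
  have hbound := enorm_mul_measure_rpow_le_of_eLpNorm_mul_le (by simpa using hp0)
    (by simpa using hq0) hbdd hAn hpos.ne' (hfin n).ne (hc n)
  rw [ENNReal.toReal_ofReal hp0.le, ENNReal.toReal_ofReal hq0.le] at hbound
  have key := ENNReal.rpow_le_mul_of_mul_rpow_le hr0 hr hpos.ne' (hfin n).ne hbound
  rw [div_le_iff₀ (ENNReal.toReal_pos hpos.ne' (hfin n).ne)]
  simpa [ENNReal.toReal_mul, ← ENNReal.toReal_rpow] using
    ENNReal.toReal_mono (ENNReal.mul_ne_top (by simp [hr0.le]) (hfin n).ne) key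

/-- Let `1 < q < p < ∞` with `1/q = 1/p + 1/r`. If `w` is measurable,
a.e. constant (with value `c n`) on each atom `A n` of the atomic part, and `M_w`
maps `L^q` boundedly into `L^p`, then `sup_n |c n|^r / μ(A n) < ∞`. -/
theorem mult_up_exponent_atoms_sup_finite
    {X : Type*} {mX : MeasurableSpace X} (μ : Measure X) [SigmaFinite μ]
    (p q r : ℝ) (hq : 1 < q) (hqp : q < p) (hr : 1 / p + 1 / r = 1 / q)
    (A : ℕ → Set X)
    (hatom : ∀ n, IsMeasAtom μ (A n))
    (hfin : ∀ n, μ (A n) < ∞)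
    (hdisj : Pairwise (Function.onFun Disjoint A))
    (w : X → ℝ) (hw : Measurable w)
    (c : ℕ → ℝ) (hc : ∀ n, ∀ᵐ x ∂μ, x ∈ A n → w x = c n)
    (C : ℝ≥0)
    (hbdd : ∀ f : X → ℝ, MemLp f (ENNReal.ofReal q) μ →
      eLpNorm (fun x => w x * f x) (ENNReal.ofReal p) μ ≤
        C * eLpNorm f (ENNReal.ofReal q) μ) :
    ∃ M : ℝ, ∀ n, |c n| ^ r / (μ (A n)).toReal ≤ M :=
  mult_up_exponent_atoms_sup_finite_general (mX := mX) μ p q r hq hqp hr A hatom hfin w c hc C hbdd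
end

section
/- If a multiplication operator M_v : L^p(μ) → L^q(μ) with 1 < q < p < ∞ is bounded, then v ∈ L^r(μ) where 1/q = 1/p + 1/r, with ‖v‖_r controlled by the operator norm. -/
open MeasureTheory Filter
open scoped NNReal ENNReal

/-!
Test the bound on `f = 𝟙_s |v|^(r/p)` for a set `s` of finite measure on which `v` is bounded.
Writing `N = ‖v‖_{L^r(μ|s)}`, the relations `p · (r/p) = r` and `q · (1 + r/p) = r` give
`‖f‖_p = N^(r/p)` and `‖v f‖_q = N^(1 + r/p)`, so `N^(1 + r/p) ≤ C N^(r/p)`, and `N ≤ C` since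
`N < ∞`. Exhausting `X` by such sets gives `‖v‖_r ≤ C`.
-/

namespace ENNReal

theorem le_of_rpow_one_add_le_mul_rpow {a C : ℝ≥0∞} {t : ℝ} (ha : a ≠ ∞) (ht : 0 ≤ t)
    (h : a ^ (1 + t) ≤ C * a ^ t) : a ≤ C := by
  rcases eq_or_ne a 0 with rfl | ha0
  · exact zero_le
  rw [rpow_add _ _ ha0 ha, rpow_one] at h
  exact (ENNReal.mul_le_mul_iff_left (rpow_pos (pos_iff_ne_zero.2 ha0) ha).ne'
    (rpow_ne_top_of_nonneg ht ha)).mp h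

end ENNReal

namespace MeasureTheory

variable {X : Type*} {mX : MeasurableSpace X} {μ : Measure X}

theorem eLpNorm_restrict_iUnion_of_directed {F : Type*} [NormedAddCommGroup F] {ι : Type*}
    [Countable ι] {s : ι → Set X} (hs : Directed (· ⊆ ·) s) (f : X → F) {p : ℝ≥0∞}
    (hp : p ≠ ∞) :
    eLpNorm f p (μ.restrict (⋃ i, s i)) = ⨆ i, eLpNorm f p (μ.restrict (s i)) := by
  rcases eq_or_ne p 0 with rfl | hp0
  · simp only [eLpNorm_exponent_zero, ENNReal.iSup_zero]
  have hp_pos : 0 < 1 / p.toReal := one_div_pos.2 (ENNReal.toReal_pos hp0 hp)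
  simp only [eLpNorm_eq_lintegral_rpow_enorm_toReal hp0 hp, setLIntegral_iUnion_of_directed _ hs]
  exact (ENNReal.orderIsoRpow _ hp_pos).map_iSup _

theorem exists_monotone_exhaustion_eLpNorm_restrict_ne_top [SigmaFinite μ] {F : Type*}
    [NormedAddCommGroup F] [MeasurableSpace F] [OpensMeasurableSpace F] {v : X → F} (hv : Measurable v) (p : ℝ≥0∞) :
    ∃ E : ℕ → Set X, Monotone E ∧ (∀ n, MeasurableSet (E n)) ∧ ⋃ n, E n = Set.univ ∧
      ∀ n, eLpNorm v p (μ.restrict (E n)) ≠ ∞ := by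
  set E : ℕ → Set X := fun n => spanningSets μ n ∩ {x | ‖v x‖ ≤ n}
  have hE_meas : ∀ n, MeasurableSet (E n) := fun n =>
    (measurableSet_spanningSets μ n).inter (measurableSet_le hv.norm measurable_const)
  refine ⟨E, fun m n hmn => ?_, hE_meas, ?_, fun n => ?_⟩
  · refine Set.inter_subset_inter (monotone_spanningSets μ hmn) fun x (hx : ‖v x‖ ≤ m) => ?_
    exact hx.trans (Nat.cast_le.2 hmn)
  · refine Set.eq_univ_of_forall fun x => ?_
    obtain ⟨m, hm⟩ := Set.mem_iUnion.1 ((iUnion_spanningSets μ).symm ▸ Set.mem_univ x)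
    obtain ⟨k, hk⟩ := exists_nat_ge ‖v x‖
    exact Set.mem_iUnion.2 ⟨max m k, monotone_spanningSets μ (le_max_left m k) hm,
      hk.trans (Nat.cast_le.2 (le_max_right m k))⟩
  · have hbound : ∀ᵐ x ∂μ.restrict (E n), ‖v x‖ ≤ n :=
      ae_restrict_of_forall_mem (hE_meas n) fun x hx => hx.2
    refine ne_top_of_le_ne_top ?_ (eLpNorm_le_of_ae_bound hbound)
    rw [Measure.restrict_apply_univ]
    exact ENNReal.mul_ne_top (ENNReal.rpow_ne_top_of_nonneg (inv_nonneg.2 ENNReal.toReal_nonneg)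
      (measure_inter_lt_top_of_left_ne_top (measure_spanningSets_lt_top μ n).ne).ne)
      ENNReal.ofReal_ne_top

theorem eLpNorm_restrict_le_of_mul_eLpNorm_le {p q r : ℝ} (hq : 0 < q) (hqp : q < p)
    (hr : 1 / r = 1 / q - 1 / p) {v : X → ℝ} (hv : AEStronglyMeasurable v μ) {C : ℝ≥0}
    (hbdd : ∀ f : X → ℝ, MemLp f (ENNReal.ofReal p) μ →
      eLpNorm (fun x => v x * f x) (ENNReal.ofReal q) μ ≤ C * eLpNorm f (ENNReal.ofReal p) μ)
    {s : Set X} (hs : MeasurableSet s) (hfin : eLpNorm v (ENNReal.ofReal r) (μ.restrict s) ≠ ∞) :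
    eLpNorm v (ENNReal.ofReal r) (μ.restrict s) ≤ C := by
  have hp : 0 < p := hq.trans hqp
  have hr0 : 0 < r := one_div_pos.1 (hr ▸ sub_pos.2 (one_div_lt_one_div_of_lt hq hqp))
  have hqr : q * (1 + r / p) = r := by
    field_simp at hr ⊢
    linarith
  set t := r / p
  have ht : 0 < t := div_pos hr0 hp
  set N := eLpNorm v (ENNReal.ofReal r) (μ.restrict s)
  set f : X → ℝ := s.indicator fun x => ‖v x‖ ^ t
  have hf_norm : eLpNorm f (ENNReal.ofReal p) μ = N ^ t := by
    rw [eLpNorm_indicator_eq_eLpNorm_restrict hs, eLpNorm_norm_rpow _ ht,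
      ← ENNReal.ofReal_mul hp.le, mul_div_cancel₀ r hp.ne']
  have hvf_norm : eLpNorm (fun x => v x * f x) (ENNReal.ofReal q) μ = N ^ (1 + t) := by
    have hnorm : ∀ x, ‖v x * f x‖ = ‖s.indicator (fun x => ‖v x‖ ^ (1 + t)) x‖ := by
      intro x
      by_cases hx : x ∈ s
      · simp only [f, Set.indicator_of_mem hx]
        rw [norm_mul,
          Real.norm_of_nonneg (Real.rpow_nonneg (norm_nonneg (v x)) t),
          Real.norm_of_nonneg (Real.rpow_nonneg (norm_nonneg (v x)) (1 + t)),
          Real.rpow_one_add' (norm_nonneg _) (by positivity)]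
      · simp [f, hx]
    rw [eLpNorm_congr_norm_ae (Eventually.of_forall hnorm),
      eLpNorm_indicator_eq_eLpNorm_restrict hs, eLpNorm_norm_rpow _ (by positivity),
      ← ENNReal.ofReal_mul hq.le, hqr]
  have hf_memLp : MemLp f (ENNReal.ofReal p) μ :=
    ⟨((Real.continuous_rpow_const ht.le).comp_aestronglyMeasurable hv.norm).indicator hs,
      hf_norm ▸ (ENNReal.rpow_ne_top_of_nonneg ht.le hfin).lt_top⟩
  have hbound := hbdd f hf_memLp
  rw [hvf_norm, hf_norm] at hbound
  exact ENNReal.le_of_rpow_one_add_le_mul_rpow hfin ht.le hbound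

end MeasureTheory

/-- If `M_v : L^p → L^q` with `1 < q < p < ∞` is bounded with bound `C`,
then `v ∈ L^r(μ)` where `1/r = 1/q - 1/p`, with `‖v‖_r ≤ C`. -/
theorem mult_down_exponent_memLr
    {X : Type*} {mX : MeasurableSpace X} (μ : Measure X) [SigmaFinite μ]
    (p q r : ℝ) (hq : 1 < q) (hqp : q < p) (hr : 1 / r = 1 / q - 1 / p)
    (v : X → ℝ) (hv : Measurable v)
    (C : ℝ≥0)
    (hbdd : ∀ f : X → ℝ, MemLp f (ENNReal.ofReal p) μ →
      eLpNorm (fun x => v x * f x) (ENNReal.ofReal q) μ ≤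
        C * eLpNorm f (ENNReal.ofReal p) μ) :
    MemLp v (ENNReal.ofReal r) μ ∧ eLpNorm v (ENNReal.ofReal r) μ ≤ C := by
  obtain ⟨E, hE_mono, hE_meas, hE_univ, hE_fin⟩ :=
    exists_monotone_exhaustion_eLpNorm_restrict_ne_top (μ := μ) hv (ENNReal.ofReal r)
  have hle : eLpNorm v (ENNReal.ofReal r) μ ≤ C := by
    rw [← Measure.restrict_univ (μ := μ), ← hE_univ,
      eLpNorm_restrict_iUnion_of_directed hE_mono.directed_le v ENNReal.ofReal_ne_top]
    exact iSup_le fun n => eLpNorm_restrict_le_of_mul_eLpNorm_le (zero_lt_one.trans hq) hqp hr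
      hv.aestronglyMeasurable hbdd (hE_meas n) (hE_fin n)
  exact ⟨⟨hv.aestronglyMeasurable, hle.trans_lt ENNReal.coe_lt_top⟩, hle⟩
end
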